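/- The relation ↦_UTPM is confluent in the following sense: for all NLPs P, P', and P'', if P ↦*_UTPM P' and P ↦*_UTPM P'' and both P' and P'' are irreducible with respect to ↦_UTPM, then P' = P''. -/
import Mathlib


/-- A rule of a normal logic program:
`head ← bodyPos, not bodyNeg`. -/
structure Rule (α : Type) where
  head : α
  bodyPos : Finset α
  bodyNeg : Finset α
deriving DecidableEq

/-- A normal logic program (NLP): a finite set of rules. -/
abbrev NLP (α : Type) := Finset (Rule α)

variable {α : Type} [DecidableEq α]

/-- The atoms occurring in a rule. -/
def Rule.atoms (r : Rule α) : Finset α :=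
  insert r.head (r.bodyPos ∪ r.bodyNeg)

/-- The Herbrand base of a program: all atoms occurring in it. -/
def HB (P : NLP α) : Finset α := P.sup Rule.atoms

/-- A three-valued interpretation, given by its sets of true and false atoms. -/
structure Interp (α : Type) where
  T : Set α
  F : Set α

/-- `I` is a 3-valued interpretation over the Herbrand base `H`. -/
def IsInterp (H : Finset α) (I : Interp α) : Prop :=
  I.T ⊆ ↑H ∧ I.F ⊆ ↑H ∧ Disjoint I.T I.F

/-- A rule of a positive program obtained as a reduct; `hasU` records whether
the special atom `u` (undefined in every interpretation) occurs in its body. -/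
structure PosRule (α : Type) where
  head : α
  bodyPos : Finset α
  hasU : Prop

/-- The reduct `P/I`: delete every rule whose negative body meets `I.T`,
delete each `not b` with `b ∈ I.F`, and replace the remaining negative
literals by the special atom `u`. -/
def reduct (P : NLP α) (I : Interp α) : Set (PosRule α) :=
  { q | ∃ r ∈ P, (∀ b ∈ r.bodyNeg, b ∉ I.T) ∧
        q.head = r.head ∧ q.bodyPos = r.bodyPos ∧
        (q.hasU ↔ ∃ b ∈ r.bodyNeg, b ∉ I.F) }

/-- The `Ψ` operator of a positive program `Q` relative to the Herbrand base
`H`; the special atom `u` is neither true nor false in any interpretation. -/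
def PsiOp (H : Finset α) (Q : Set (PosRule α)) (J : Interp α) : Interp α where
  T := { c | c ∈ H ∧ ∃ q ∈ Q, q.head = c ∧ ¬ q.hasU ∧ ∀ a ∈ q.bodyPos, a ∈ J.T }
  F := { c | c ∈ H ∧ ∀ q ∈ Q, q.head = c → ∃ a ∈ q.bodyPos, a ∈ J.F }

/-- Iteration of `Ψ` starting from `⟨∅, H⟩`. -/
def PsiIter (H : Finset α) (Q : Set (PosRule α)) : ℕ → Interp α
  | 0 => ⟨∅, ↑H⟩
  | n + 1 => PsiOp H Q (PsiIter H Q n)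

/-- `Ω_P(I)`: the least three-valued model of the reduct `P/I`,
obtained as the `ω`-iteration of `Ψ`. -/
def OmegaOp (H : Finset α) (P : NLP α) (I : Interp α) : Interp α where
  T := ⋃ n, (PsiIter H (reduct P I) n).T
  F := ⋂ n, (PsiIter H (reduct P I) n).F

/-- `I` is a partial stable model of `P` (over Herbrand base `H`). -/
def IsPSModel (H : Finset α) (P : NLP α) (I : Interp α) : Prop :=
  IsInterp H I ∧ OmegaOp H P I = I

/-- Well-founded model: a partial stable model with `⊆`-minimal true part. -/
def IsWFModel (H : Finset α) (P : NLP α) (I : Interp α) : Prop :=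
  IsPSModel H P I ∧ ∀ J, IsPSModel H P J → ¬ J.T ⊂ I.T

/-- Regular model: a partial stable model with `⊆`-maximal true part. -/
def IsRegularModel (H : Finset α) (P : NLP α) (I : Interp α) : Prop :=
  IsPSModel H P I ∧ ∀ J, IsPSModel H P J → ¬ I.T ⊂ J.T

/-- Stable model: a partial stable model with `T ∪ F = H`. -/
def IsStableModel (H : Finset α) (P : NLP α) (I : Interp α) : Prop :=
  IsPSModel H P I ∧ I.T ∪ I.F = ↑H

/-- L-stable model: a partial stable model with `⊆`-maximal `T ∪ F`. -/
def IsLStableModel (H : Finset α) (P : NLP α) (I : Interp α) : Prop :=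
  IsPSModel H P I ∧ ∀ J, IsPSModel H P J → ¬ (I.T ∪ I.F) ⊂ (J.T ∪ J.F)

/-- `IsStatement P c V R`: there is a statement of `P` with conclusion `c`,
vulnerabilities `V` and rules `R`.  A statement is built from a rule
`r = c ← a₁,…,a_m, not b₁,…,not b_n ∈ P` together with statements `sᵢ` for the
positive body atoms `aᵢ` (with `r` not among their rules); its vulnerabilities
are `Vul(s₁) ∪ … ∪ Vul(s_m) ∪ {b₁,…,b_n}` and its rules are
`Rules(s₁) ∪ … ∪ Rules(s_m) ∪ {r}`. -/
inductive IsStatement (P : NLP α) : α → Finset α → Finset (Rule α) → Prop where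
  | mk (r : Rule α) (hr : r ∈ P) (v : α → Finset α) (ρ : α → Finset (Rule α))
      (hsub : ∀ a ∈ r.bodyPos, IsStatement P a (v a) (ρ a))
      (hnr : ∀ a ∈ r.bodyPos, r ∉ ρ a) :
      IsStatement P r.head (r.bodyPos.biUnion v ∪ r.bodyNeg)
        (insert r (r.bodyPos.biUnion ρ))

/-- `c` is an argument of `P`: it is the conclusion of some statement. -/
def IsArg (P : NLP α) (c : α) : Prop := ∃ V R, IsStatement P c V R

open Classical in
/-- The set `A_P` of arguments of `P`. -/
noncomputable def argsOf (P : NLP α) : Finset α := (HB P).filter (IsArg P)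

/-- `B` meets every vulnerability set of `a` in `P`. -/
def HitsVul (P : NLP α) (B : Finset α) (a : α) : Prop :=
  ∀ V R, IsStatement P a V R → ∃ b ∈ B, b ∈ V

/-- A SETAF: a finite set of arguments and an attack relation between
finite sets of arguments and arguments. -/
structure SETAF (α : Type) where
  args : Finset α
  att : Finset α → α → Prop

/-- Well-formedness of a SETAF: attackers are nonempty sets of arguments
attacking arguments, and attacking sets are `⊆`-minimal. -/
def SETAF.Wf (S : SETAF α) : Prop :=
  (∀ B a, S.att B a → B.Nonempty ∧ B ⊆ S.args ∧ a ∈ S.args) ∧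
  (∀ B a, S.att B a → ∀ B', B' ⊂ B → ¬ S.att B' a)

/-- The SETAF `𝔄_P` associated with an NLP `P`: its arguments are the
conclusions of the statements of `P`, and `B` attacks `a` iff `B` is a
`⊆`-minimal set of arguments meeting every vulnerability set of `a`. -/
noncomputable def setafOf (P : NLP α) : SETAF α where
  args := argsOf P
  att := fun B a =>
    B ⊆ argsOf P ∧ a ∈ argsOf P ∧ HitsVul P B a ∧ ∀ B', B' ⊂ B → ¬ HitsVul P B' a

/-- Labels for arguments. -/
inductive Lab : Type
  | inn | out | und
deriving DecidableEq

/-- `in(L)`. -/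
def labIn (S : SETAF α) (L : α → Lab) : Set α := { a | a ∈ S.args ∧ L a = Lab.inn }

/-- `out(L)`. -/
def labOut (S : SETAF α) (L : α → Lab) : Set α := { a | a ∈ S.args ∧ L a = Lab.out }

/-- `undec(L)`. -/
def labUnd (S : SETAF α) (L : α → Lab) : Set α := { a | a ∈ S.args ∧ L a = Lab.und }

/-- Admissible labelling. -/
def AdmissibleLab (S : SETAF α) (L : α → Lab) : Prop :=
  ∀ a ∈ S.args,
    (L a = Lab.inn → ∀ B, S.att B a → ∃ b ∈ B, L b = Lab.out) ∧
    (L a = Lab.out → ∃ B, S.att B a ∧ ∀ b ∈ B, L b = Lab.inn)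

/-- Complete labelling. -/
def CompleteLab (S : SETAF α) (L : α → Lab) : Prop :=
  AdmissibleLab S L ∧
  ∀ a ∈ S.args, L a = Lab.und →
    (∃ B, S.att B a ∧ ∀ b ∈ B, L b ≠ Lab.out) ∧
    (∀ B, S.att B a → ∃ b ∈ B, L b ≠ Lab.inn)

/-- Grounded labelling: complete with `⊆`-minimal `in(L)`. -/
def GroundedLab (S : SETAF α) (L : α → Lab) : Prop :=
  CompleteLab S L ∧ ∀ L', CompleteLab S L' → ¬ labIn S L' ⊂ labIn S L

/-- Preferred labelling: complete with `⊆`-maximal `in(L)`. -/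
def PreferredLab (S : SETAF α) (L : α → Lab) : Prop :=
  CompleteLab S L ∧ ∀ L', CompleteLab S L' → ¬ labIn S L ⊂ labIn S L'

/-- Stable labelling: complete with `undec(L) = ∅`. -/
def StableLab (S : SETAF α) (L : α → Lab) : Prop :=
  CompleteLab S L ∧ labUnd S L = ∅

/-- Semi-stable labelling: complete with `⊆`-minimal `undec(L)`. -/
def SemiStableLab (S : SETAF α) (L : α → Lab) : Prop :=
  CompleteLab S L ∧ ∀ L', CompleteLab S L' → ¬ labUnd S L' ⊂ labUnd S L

/-- `L2I_P`: the interpretation associated with a labelling of `𝔄_P`. -/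
def L2I (P : NLP α) (L : α → Lab) : Interp α where
  T := { c | c ∈ HB P ∧ c ∈ argsOf P ∧ L c = Lab.inn }
  F := { c | c ∈ HB P ∧ (c ∉ argsOf P ∨ (c ∈ argsOf P ∧ L c = Lab.out)) }

open Classical in
/-- `I2L`: the labelling associated with an interpretation (meaningful on
the arguments). -/
noncomputable def I2L (I : Interp α) : α → Lab := fun c =>
  if c ∈ I.T then Lab.inn else if c ∈ I.F then Lab.out else Lab.und

/-- `L2I_𝔄`: the interpretation `⟨in(L), out(L)⟩` associated with a labelling
of a SETAF `𝔄`. -/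
def L2Iset (S : SETAF α) (L : α → Lab) : Interp α := ⟨labIn S L, labOut S L⟩

/-- `V` meets every attacker of `a` in `S`. -/
def HitsAtt (S : SETAF α) (a : α) (V : Finset α) : Prop :=
  ∀ B, S.att B a → ∃ b ∈ B, b ∈ V

/-- `V ∈ V_a`: a `⊆`-minimal set of arguments meeting every attacker of `a`. -/
def MemVa (S : SETAF α) (a : α) (V : Finset α) : Prop :=
  V ⊆ S.args ∧ HitsAtt S a V ∧ ∀ V', V' ⊂ V → ¬ HitsAtt S a V'

open Classical in
/-- The NLP `P_𝔄` associated with a SETAF `𝔄`: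
`{ a ← not b₁,…,not b_n | a ∈ A, {b₁,…,b_n} ∈ V_a }`. -/
noncomputable def nlpOf (S : SETAF α) : NLP α :=
  ((S.args ×ˢ S.args.powerset).filter (fun p => MemVa S p.1 p.2)).image
    (fun p => { head := p.1, bodyPos := ∅, bodyNeg := p.2 })

/-- Redundancy-Free Atomic Logic Program: every rule is atomic (no positive
body), every atom is a head, and no rule's negative body strictly contains
that of another rule with the same head. -/
def IsRFALP (P : NLP α) : Prop :=
  (∀ r ∈ P, r.bodyPos = ∅) ∧
  HB P = P.image Rule.head ∧
  ∀ r ∈ P, ∀ r' ∈ P, r'.head = r.head → ¬ r'.bodyNeg ⊂ r.bodyNeg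

/-- Unfolding: replace a rule `c ← a, a₁,…,a_m, not b₁,…,not b_n` by all rules
obtained by resolving `a` against the rules of the program with head `a`. -/
def StepU (P₁ P₂ : NLP α) : Prop :=
  ∃ r ∈ P₁, ∃ a ∈ r.bodyPos,
    P₂ = P₁.erase r ∪
      (P₁.filter (fun r' => r'.head = a)).image
        (fun r' => { head := r.head,
                     bodyPos := r'.bodyPos ∪ r.bodyPos.erase a,
                     bodyNeg := r'.bodyNeg ∪ r.bodyNeg })

/-- Elimination of tautologies: delete a rule whose head occurs in its
positive body. -/
def StepT (P₁ P₂ : NLP α) : Prop :=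
  ∃ r ∈ P₁, r.head ∈ r.bodyPos ∧ P₂ = P₁.erase r

/-- Positive reduction: delete a literal `not b` from the body of a rule,
where `b` is not the head of any rule of the program. -/
def StepP (P₁ P₂ : NLP α) : Prop :=
  ∃ r ∈ P₁, ∃ b ∈ r.bodyNeg, (∀ r' ∈ P₁, r'.head ≠ b) ∧
    P₂ = insert { head := r.head, bodyPos := r.bodyPos,
                  bodyNeg := r.bodyNeg.erase b } (P₁.erase r)

/-- Elimination of non-minimal rules: delete a rule subsumed by a distinct
rule with the same head and smaller bodies. -/
def StepM (P₁ P₂ : NLP α) : Prop :=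
  ∃ r ∈ P₁, ∃ r' ∈ P₁, r ≠ r' ∧ r'.head = r.head ∧
    r'.bodyPos ⊆ r.bodyPos ∧ r'.bodyNeg ⊆ r.bodyNeg ∧ P₂ = P₁.erase r

/-- `↦_UTPM`: the union of the four transformations. -/
def StepUTPM (P₁ P₂ : NLP α) : Prop :=
  StepU P₁ P₂ ∨ StepT P₁ P₂ ∨ StepP P₁ P₂ ∨ StepM P₁ P₂

/-- `P` is irreducible w.r.t. `↦_UTPM`: there is no `P' ≠ P` with
`P ↦_UTPM P'`. -/
def UTPMIrreducible (P : NLP α) : Prop :=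
  ¬ ∃ P', StepUTPM P P' ∧ P' ≠ P

/-- Positive derivability of an atom, where a rule may be used only if its
negative body is contained in the "allowed" set `M`. -/
inductive Deriv (Q : NLP α) (M : Set α) : α → Prop
  | intro (r : Rule α) (hr : r ∈ Q) (hneg : (r.bodyNeg : Set α) ⊆ M)
      (hpos : ∀ a ∈ r.bodyPos, Deriv Q M a) : Deriv Q M r.head

lemma deriv_closure {Q : NLP α} {M : Set α} {D : α → Prop}
    (h : ∀ r ∈ Q, (r.bodyNeg : Set α) ⊆ M → (∀ a ∈ r.bodyPos, D a) → D r.head) :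
    ∀ c, Deriv Q M c → D c := by
  intro c hc
  induction hc with
  | intro r hr hneg hpos ih => exact h r hr hneg ih

lemma head_of_deriv {Q : NLP α} {M : Set α} {c : α} (h : Deriv Q M c) :
    ∃ r ∈ Q, r.head = c := by
  cases h with
  | intro r hr hneg hpos => exact ⟨r, hr, rfl⟩

lemma derivU {P₁ P₂ : NLP α} (h : StepU P₁ P₂) (M : Set α) (c : α) :
    Deriv P₁ M c ↔ Deriv P₂ M c := by
  obtain ⟨r, hrP, a, ha, hP2⟩ := h
  constructor
  · refine deriv_closure (fun s hs hneg hpos => ?_) c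
    by_cases hsr : s = r
    · subst hsr
      by_cases hha : s.head ∈ s.bodyPos
      · exact hpos _ hha
      · have haD : Deriv P₂ M a := hpos a ha
        cases haD with
        | intro q hq hnq hpq =>
          rw [hP2] at hq
          rcases Finset.mem_union.1 hq with hq' | hq'
          · have hqP1 : q ∈ P₁ := Finset.mem_of_mem_erase hq'
            have hρ : ({ head := s.head,
                         bodyPos := q.bodyPos ∪ s.bodyPos.erase q.head,
                         bodyNeg := q.bodyNeg ∪ s.bodyNeg } : Rule α) ∈ P₂ := by
              rw [hP2]
              refine Finset.mem_union_right _ (Finset.mem_image.2 ⟨q, ?_, rfl⟩)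
              exact Finset.mem_filter.2 ⟨hqP1, rfl⟩
            exact Deriv.intro ({ head := s.head,
                                 bodyPos := q.bodyPos ∪ s.bodyPos.erase q.head,
                                 bodyNeg := q.bodyNeg ∪ s.bodyNeg } : Rule α) hρ
              (by intro x hx
                  rcases Finset.mem_union.1 (by exact_mod_cast hx) with h' | h'
                  · exact hnq (by exact_mod_cast h')
                  · exact hneg (by exact_mod_cast h'))
              (by intro x hx
                  rcases Finset.mem_union.1 hx with h' | h'
                  · exact hpq x h'
                  · exact hpos x (Finset.mem_of_mem_erase h'))
          · obtain ⟨r', hr', heq⟩ := Finset.mem_image.1 hq'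
            have : q.head = s.head := by rw [← heq]
            exact absurd (this ▸ ha) hha
    · have hs' : s ∈ P₂ := by
        rw [hP2]
        exact Finset.mem_union_left _ (Finset.mem_erase.2 ⟨hsr, hs⟩)
      exact Deriv.intro s hs' hneg hpos
  · refine deriv_closure (fun q hq hneg hpos => ?_) c
    rw [hP2] at hq
    rcases Finset.mem_union.1 hq with hq' | hq'
    · exact Deriv.intro q (Finset.mem_of_mem_erase hq') hneg hpos
    · obtain ⟨r', hr', rfl⟩ := Finset.mem_image.1 hq'
      obtain ⟨hr'P, hr'head⟩ := Finset.mem_filter.1 hr'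
      have hnegr' : (r'.bodyNeg : Set α) ⊆ M := by
        intro x hx
        exact hneg (by exact_mod_cast Finset.mem_union_left _ (by exact_mod_cast hx))
      have hnegr : (r.bodyNeg : Set α) ⊆ M := by
        intro x hx
        exact hneg (by exact_mod_cast Finset.mem_union_right _ (by exact_mod_cast hx))
      have hda : Deriv P₁ M a := by
        have := Deriv.intro r' hr'P hnegr'
          (fun x hx => hpos x (Finset.mem_union_left _ hx))
        rwa [hr'head] at this
      refine Deriv.intro r hrP hnegr (fun x hx => ?_)
      by_cases hxa : x = a
      · exact hxa ▸ hda
      · exact hpos x (Finset.mem_union_right _ (Finset.mem_erase.2 ⟨hxa, hx⟩))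

lemma derivT {P₁ P₂ : NLP α} (h : StepT P₁ P₂) (M : Set α) (c : α) :
    Deriv P₁ M c ↔ Deriv P₂ M c := by
  obtain ⟨r, hr, htaut, hP2⟩ := h
  constructor
  · refine deriv_closure (fun s hs hneg hpos => ?_) c
    by_cases hsr : s = r
    · exact hpos _ (hsr ▸ htaut)
    · exact Deriv.intro s (hP2 ▸ Finset.mem_erase.2 ⟨hsr, hs⟩) hneg hpos
  · refine deriv_closure (fun s hs hneg hpos => ?_) c
    exact Deriv.intro s (Finset.mem_of_mem_erase (hP2 ▸ hs)) hneg hpos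

lemma derivM {P₁ P₂ : NLP α} (h : StepM P₁ P₂) (M : Set α) (c : α) :
    Deriv P₁ M c ↔ Deriv P₂ M c := by
  obtain ⟨r, hr, r', hr', hne, hhead, hposs, hnegs, hP2⟩ := h
  constructor
  · refine deriv_closure (fun s hs hneg hpos => ?_) c
    by_cases hsr : s = r
    · subst hsr
      have hr'2 : r' ∈ P₂ := hP2 ▸ Finset.mem_erase.2 ⟨fun h' => hne h'.symm, hr'⟩
      have := Deriv.intro r' hr'2
        (fun x hx => hneg (by exact_mod_cast hnegs (by exact_mod_cast hx)))
        (fun x hx => hpos x (hposs hx))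
      rwa [hhead] at this
    · exact Deriv.intro s (hP2 ▸ Finset.mem_erase.2 ⟨hsr, hs⟩) hneg hpos
  · refine deriv_closure (fun s hs hneg hpos => ?_) c
    exact Deriv.intro s (Finset.mem_of_mem_erase (hP2 ▸ hs)) hneg hpos

lemma derivP {P₁ P₂ : NLP α} (h : StepP P₁ P₂) (M : Set α)
    (hM : ∀ x, (∀ r' ∈ P₁, r'.head ≠ x) → x ∈ M) (c : α) :
    Deriv P₁ M c ↔ Deriv P₂ M c := by
  obtain ⟨r, hr, b, hb, hnh, hP2⟩ := h
  have hbM : b ∈ M := hM b hnh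
  constructor
  · refine deriv_closure (fun s hs hneg hpos => ?_) c
    by_cases hsr : s = r
    · subst hsr
      refine Deriv.intro ({ head := s.head, bodyPos := s.bodyPos,
                            bodyNeg := s.bodyNeg.erase b } : Rule α)
        (hP2 ▸ Finset.mem_insert_self _ _) (fun x hx => hneg ?_) hpos
      exact_mod_cast Finset.mem_of_mem_erase (by exact_mod_cast hx)
    · exact Deriv.intro s
        (hP2 ▸ Finset.mem_insert_of_mem (Finset.mem_erase.2 ⟨hsr, hs⟩)) hneg hpos
  · refine deriv_closure (fun s hs hneg hpos => ?_) c
    rw [hP2] at hs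
    rcases Finset.mem_insert.1 hs with hs' | hs'
    · subst hs'
      refine Deriv.intro r hr (fun x hx => ?_) hpos
      by_cases hxb : x = b
      · exact hxb ▸ hbM
      · refine hneg ?_
        exact_mod_cast Finset.mem_erase.2 ⟨hxb, by exact_mod_cast hx⟩
    · exact Deriv.intro s (Finset.mem_of_mem_erase hs') hneg hpos

/-- The semantic invariant: `c` is derivable assuming exactly the atoms in `N`
(together with the never-derivable atoms) to be false. -/
def Phi (P : NLP α) (c : α) (N : Set α) : Prop :=
  Deriv P (N ∪ {x | ¬ Deriv P Set.univ x}) c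

lemma phi_step {P₁ P₂ : NLP α} (h : StepUTPM P₁ P₂) (c : α) (N : Set α) :
    Phi P₁ c N ↔ Phi P₂ c N := by
  have huniv : ∀ c, Deriv P₁ Set.univ c ↔ Deriv P₂ Set.univ c := by
    intro c
    rcases h with h | h | h | h
    · exact derivU h _ c
    · exact derivT h _ c
    · exact derivP h _ (fun x _ => Set.mem_univ x) c
    · exact derivM h _ c
  have hsets : {x | ¬ Deriv P₁ Set.univ x} = {x | ¬ Deriv P₂ Set.univ x} := by
    ext x; simp [huniv x]
  unfold Phi
  rw [← hsets]
  rcases h with h | h | h | h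
  · exact derivU h _ c
  · exact derivT h _ c
  · refine derivP h _ (fun x hx => ?_) c
    refine Or.inr (fun hd => ?_)
    obtain ⟨r', hr', hh⟩ := head_of_deriv hd
    exact hx r' hr' hh
  · exact derivM h _ c

lemma phi_rtg {P Q : NLP α} (h : Relation.ReflTransGen StepUTPM P Q) (c : α)
    (N : Set α) : Phi P c N ↔ Phi Q c N := by
  induction h with
  | refl => rfl
  | tail _ hstep ih => exact ih.trans (phi_step hstep c N)

lemma irr_bodyPos {P : NLP α} (h : UTPMIrreducible P) :
    ∀ r ∈ P, r.bodyPos = ∅ := by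
  intro r hr
  by_contra hpos
  obtain ⟨a, ha⟩ := Finset.nonempty_iff_ne_empty.2 hpos
  set P₂ := P.erase r ∪
      (P.filter (fun r' => r'.head = a)).image
        (fun r' => { head := r.head,
                     bodyPos := r'.bodyPos ∪ r.bodyPos.erase a,
                     bodyNeg := r'.bodyNeg ∪ r.bodyNeg }) with hP2def
  have hstep : StepU P P₂ := ⟨r, hr, a, ha, rfl⟩
  have hP2 : P₂ = P := by
    by_contra hne
    exact h ⟨P₂, Or.inl hstep, hne⟩
  have hrP2 : r ∈ P₂ := hP2 ▸ hr
  rcases Finset.mem_union.1 hrP2 with h' | h'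
  · exact (Finset.mem_erase.1 h').1 rfl
  · obtain ⟨r', hr', heq⟩ := Finset.mem_image.1 h'
    obtain ⟨hr'P, hr'head⟩ := Finset.mem_filter.1 hr'
    have hbp : r'.bodyPos ∪ r.bodyPos.erase a = r.bodyPos := congrArg Rule.bodyPos heq
    have haa : a ∈ r'.bodyPos := by
      have := hbp ▸ ha
      rcases Finset.mem_union.1 this with h'' | h''
      · exact h''
      · exact absurd rfl (Finset.mem_erase.1 h'').1
    have htaut : r'.head ∈ r'.bodyPos := hr'head ▸ haa
    have hstepT : StepT P (P.erase r') := ⟨r', hr'P, htaut, rfl⟩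
    have : P.erase r' ≠ P := fun he => (Finset.erase_eq_self.1 he) hr'P
    exact h ⟨P.erase r', Or.inr (Or.inl hstepT), this⟩

lemma irr_neg_head {P : NLP α} (h : UTPMIrreducible P) :
    ∀ r ∈ P, ∀ b ∈ r.bodyNeg, ∃ r' ∈ P, r'.head = b := by
  intro r hr b hb
  by_contra hno
  push_neg at hno
  set P₂ := insert ({ head := r.head, bodyPos := r.bodyPos,
                      bodyNeg := r.bodyNeg.erase b } : Rule α) (P.erase r) with hP2def
  have hstep : StepP P P₂ := ⟨r, hr, b, hb, hno, rfl⟩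
  have hP2 : P₂ = P := by
    by_contra hne
    exact h ⟨P₂, Or.inr (Or.inr (Or.inl hstep)), hne⟩
  have hrP2 : r ∈ P₂ := hP2 ▸ hr
  rcases Finset.mem_insert.1 hrP2 with h' | h'
  · have : r.bodyNeg = r.bodyNeg.erase b := by
      conv_lhs => rw [h']
    exact (Finset.mem_erase.1 (this ▸ hb)).1 rfl
  · exact (Finset.mem_erase.1 h').1 rfl

lemma irr_antichain {P : NLP α} (h : UTPMIrreducible P) :
    ∀ r ∈ P, ∀ r' ∈ P, r ≠ r' → r'.head = r.head → r'.bodyPos ⊆ r.bodyPos →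
      ¬ r'.bodyNeg ⊆ r.bodyNeg := by
  intro r hr r' hr' hne hhead hpos hneg
  have hstep : StepM P (P.erase r) := ⟨r, hr, r', hr', hne, hhead, hpos, hneg, rfl⟩
  have : P.erase r ≠ P := fun he => (Finset.erase_eq_self.1 he) hr
  exact h ⟨P.erase r, Or.inr (Or.inr (Or.inr hstep)), this⟩

lemma phi_char {P : NLP α} (h : UTPMIrreducible P) (c : α) (N : Set α) :
    Phi P c N ↔ ∃ r ∈ P, r.head = c ∧ (r.bodyNeg : Set α) ⊆ N := by
  constructor
  · intro hphi
    cases hphi with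
    | intro r hr hneg hpos =>
      refine ⟨r, hr, rfl, fun b hb => ?_⟩
      have hb' : b ∈ r.bodyNeg := by exact_mod_cast hb
      rcases hneg hb with hbN | hbS
      · exact hbN
      · exfalso
        obtain ⟨r', hr', hh⟩ := irr_neg_head h r hr b hb'
        refine hbS ?_
        have := Deriv.intro r' hr' (Set.subset_univ _)
          (fun x hx => by simp [irr_bodyPos h r' hr'] at hx)
        rwa [hh] at this
  · rintro ⟨r, hr, rfl, hsub⟩
    refine Deriv.intro r hr (hsub.trans Set.subset_union_left)
      (fun x hx => by simp [irr_bodyPos h r hr] at hx)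

lemma irr_subset {P' P'' : NLP α} (h1i : UTPMIrreducible P')
    (h2i : UTPMIrreducible P'')
    (hphi : ∀ c N, Phi P' c N ↔ Phi P'' c N) : P' ⊆ P'' := by
  intro q hq
  have hq1 : Phi P' q.head ↑q.bodyNeg :=
    (phi_char h1i _ _).2 ⟨q, hq, rfl, le_refl _⟩
  obtain ⟨s, hs, hshead, hsneg⟩ := (phi_char h2i _ _).1 ((hphi _ _).1 hq1)
  have hs1 : Phi P'' s.head ↑s.bodyNeg :=
    (phi_char h2i _ _).2 ⟨s, hs, rfl, le_refl _⟩
  obtain ⟨t, ht, hthead, htneg⟩ := (phi_char h1i _ _).1 ((hphi _ _).2 hs1)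
  have htq : t = q := by
    by_contra hne
    refine irr_antichain h1i q hq t ht (fun h' => hne h'.symm)
      (hthead.trans hshead) ?_ ?_
    · rw [irr_bodyPos h1i t ht]; exact Finset.empty_subset _
    · exact_mod_cast htneg.trans hsneg
  have hqs : s.bodyNeg = q.bodyNeg := by
    apply Finset.Subset.antisymm
    · exact_mod_cast hsneg
    · have : (q.bodyNeg : Set α) ⊆ ↑s.bodyNeg := by rw [← htq]; exact_mod_cast htneg
      exact_mod_cast this
  have hsq : s = q := by
    have h1 : s.bodyPos = q.bodyPos := by
      rw [irr_bodyPos h2i s hs, irr_bodyPos h1i q hq]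
    cases s; cases q
    simp_all
  exact hsq ▸ hs

theorem stmt19 (P P' P'' : NLP α)
    (h1 : Relation.ReflTransGen StepUTPM P P')
    (h2 : Relation.ReflTransGen StepUTPM P P'')
    (h1i : UTPMIrreducible P') (h2i : UTPMIrreducible P'') :
    P' = P'' := by
  have hphi : ∀ c N, Phi P' c N ↔ Phi P'' c N := fun c N =>
    (phi_rtg h1 c N).symm.trans (phi_rtg h2 c N)
  exact Finset.Subset.antisymm (irr_subset h1i h2i hphi)
    (irr_subset h2i h1i (fun c N => (hphi c N).symm))
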